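/- Let f be a smooth function on 𝕋^d × ℝ^d, rapidly decaying in v, with Z(f) as above. Then [[T,U],U](f) = 2 m(f) U(f) + V(f); explicitly, ∫_{𝕋^d×ℝ^d} ( Z(f)(x) + v · E(f)(x) ) ( ∂_x φ(f)(x) · ∂_v f(x,v) ) dx dv = m(f) ∫_{𝕋^d} |∂_x φ(f)(x)|² dx − ∫_{𝕋^d} Δ_x φ(f)(x) |∂_x φ(f)(x)|² dx, where U(f) = (1/2)∫_{𝕋^d}|E(f)|² dx and V(f) = −∫_{𝕋^d} Δ_x φ(f) |∂_x φ(f)|² dx. -/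

import Mathlib

open MeasureTheory Real

noncomputable section

/-- Points of `ℝ^d` (also used as lifts of points of the torus `𝕋^d = ℝ^d/(2πℤ)^d`). -/
abbrev Vec (d : ℕ) := Fin d → ℝ

/-- A fundamental domain for the torus `𝕋^d = ℝ^d/(2πℤ)^d`. -/
def Box (d : ℕ) : Set (Vec d) := Set.pi Set.univ fun _ => Set.Ioc 0 (2 * π)

/-- Partial derivative `∂_{x_i}`. -/
def pd {d : ℕ} (i : Fin d) (g : Vec d → ℝ) : Vec d → ℝ :=
  fun x => fderiv ℝ g x (Pi.single i 1)

/-- Laplacian `Δ = ∑ i ∂_{x_i}²`. -/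
def lap {d : ℕ} (g : Vec d → ℝ) : Vec d → ℝ := fun x => ∑ i, pd i (pd i g) x

/-- `(2πℤ)^d`-periodicity: a function of `x ∈ ℝ^d` descending to the torus. -/
def PeriodicVec {d : ℕ} (g : Vec d → ℝ) : Prop :=
  ∀ (x : Vec d) (k : Fin d → ℤ), g (fun i => x i + 2 * π * (k i : ℝ)) = g x

/-- `G` is the smooth, `2π`-periodic, zero-mean solution of `Δ G = rhs` on the torus. -/
def ZeroMeanLapSol {d : ℕ} (rhs G : Vec d → ℝ) : Prop :=
  ContDiff ℝ (⊤ : ℕ∞) G ∧ PeriodicVec G ∧ (∫ x in Box d, G x) = 0 ∧ ∀ x, lap G x = rhs x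

/-- A smooth function on `𝕋^d × ℝ^d` (presented as a `2π`-periodic-in-`x` function on
`ℝ^d × ℝ^d`) which is rapidly decaying in `v` together with all its derivatives. -/
def GoodPhase {d : ℕ} (f : Vec d → Vec d → ℝ) : Prop :=
  ContDiff ℝ (⊤ : ℕ∞) (fun p : Vec d × Vec d => f p.1 p.2) ∧
  (∀ (x v : Vec d) (k : Fin d → ℤ), f (fun i => x i + 2 * π * (k i : ℝ)) v = f x v) ∧
  (∀ n k : ℕ, ∃ C : ℝ, ∀ x v : Vec d,
    ‖v‖ ^ k * ‖iteratedFDeriv ℝ n (fun p : Vec d × Vec d => f p.1 p.2) (x, v)‖ ≤ C)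

/-- Density `ρ(f)(x) = ∫ f(x,v) dv`. -/
def dens {d : ℕ} (f : Vec d → Vec d → ℝ) : Vec d → ℝ := fun x => ∫ v, f x v

/-- Total mass `m(f) = (2π)^{-d} ∫∫ f dx dv`. -/
def mTot {d : ℕ} (f : Vec d → Vec d → ℝ) : ℝ :=
  ((2 * π) ^ d)⁻¹ * ∫ x in Box d, ∫ v, f x v

/-- `φ` is the electric potential of `f`: the smooth `2π`-periodic zero-mean solution of
`−Δφ = ρ(f) − m(f)`, i.e. `Δφ = m(f) − ρ(f)`. -/
def IsElectricPotential {d : ℕ} (f : Vec d → Vec d → ℝ) (φ : Vec d → ℝ) : Prop :=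
  ZeroMeanLapSol (fun x => mTot f - dens f x) φ

/-- Partial derivative in `x` of a phase-space function. -/
def pdx {d : ℕ} (i : Fin d) (f : Vec d → Vec d → ℝ) : Vec d → Vec d → ℝ :=
  fun x v => pd i (fun y => f y v) x

/-- Partial derivative in `v` of a phase-space function. -/
def pdv {d : ℕ} (i : Fin d) (f : Vec d → Vec d → ℝ) : Vec d → Vec d → ℝ :=
  fun x v => pd i (fun w => f x w) v


/-- Rapid decay of a scalar function on `ℝ^d`. -/
def Decay {d : ℕ} (h : Vec d → ℝ) : Prop := ∀ k : ℕ, ∃ C : ℝ, ∀ v, ‖v‖ ^ k * |h v| ≤ C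

lemma Decay.bound {d : ℕ} {h : Vec d → ℝ} (hd : Decay h) (k : ℕ) :
    ∃ C : ℝ, 0 ≤ C ∧ ∀ v, |h v| ≤ C * (1 + ‖v‖) ^ (-(k : ℝ)) := by
  obtain ⟨C0, h0⟩ := hd 0
  obtain ⟨Ck, hk⟩ := hd k
  have hC0 : 0 ≤ C0 := by
    have := h0 0; simp at this; exact le_trans (abs_nonneg _) this
  have hCk : 0 ≤ Ck := by
    have := hk 0
    exact le_trans (by positivity : (0:ℝ) ≤ ‖(0 : Vec d)‖ ^ k * |h 0|) this
  refine ⟨2 ^ k * (C0 + Ck), by positivity, fun v => ?_⟩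
  have hv : (0:ℝ) ≤ ‖v‖ := norm_nonneg v
  have h1 : (1 + ‖v‖) ^ k * |h v| ≤ 2 ^ k * (C0 + Ck) := by
    have hb : (1 + ‖v‖) ^ k ≤ 2 ^ k * (1 + ‖v‖ ^ k) := by
      calc (1 + ‖v‖) ^ k ≤ (2 * max 1 ‖v‖) ^ k := by
            apply pow_le_pow_left₀ (by positivity)
            rcases le_total ‖v‖ 1 with hle | hle
            · simp [max_eq_left hle]; nlinarith
            · simp [max_eq_right hle]; nlinarith
        _ = 2 ^ k * (max 1 ‖v‖) ^ k := by rw [mul_pow]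
        _ ≤ 2 ^ k * (1 + ‖v‖ ^ k) := by
            gcongr
            rcases le_total ‖v‖ 1 with hle | hle
            · simp [max_eq_left hle]
            · simp only [max_eq_right hle]
              nlinarith [pow_nonneg hv k]
    calc (1 + ‖v‖) ^ k * |h v| ≤ 2 ^ k * (1 + ‖v‖ ^ k) * |h v| := by
          exact mul_le_mul_of_nonneg_right hb (abs_nonneg _)
      _ = 2 ^ k * (1 * |h v| + ‖v‖ ^ k * |h v|) := by ring
      _ ≤ 2 ^ k * (C0 + Ck) := by
          gcongr
          · simpa using h0 v
          · exact hk v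
  have hpos : (0:ℝ) < (1 + ‖v‖) ^ k := by positivity
  rw [Real.rpow_neg (by positivity), Real.rpow_natCast]
  rw [← div_eq_mul_inv, le_div_iff₀ hpos]
  calc |h v| * (1 + ‖v‖) ^ k = (1 + ‖v‖) ^ k * |h v| := mul_comm _ _
    _ ≤ _ := h1

lemma Decay.integrable {d : ℕ} {h : Vec d → ℝ} (hc : Continuous h) (hd : Decay h) :
    Integrable h := by
  obtain ⟨C, hC0, hC⟩ := hd.bound (d + 1)
  have hfr : (Module.finrank ℝ (Vec d) : ℝ) < ((d + 1 : ℕ) : ℝ) := by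
    simp [Module.finrank_fin_fun]
  have hi : Integrable (fun v : Vec d => C * (1 + ‖v‖) ^ (-((d + 1 : ℕ) : ℝ))) :=
    (integrable_one_add_norm hfr).const_mul C
  exact hi.mono' hc.aestronglyMeasurable (ae_of_all _ fun v => by
    simpa [Real.norm_eq_abs] using hC v)

lemma Decay.mul_coord {d : ℕ} {h : Vec d → ℝ} (hd : Decay h) (j : Fin d) :
    Decay (fun v => v j * h v) := by
  intro k
  obtain ⟨C, hC⟩ := hd (k + 1)
  refine ⟨C, fun v => ?_⟩
  have h1 : |v j| ≤ ‖v‖ := by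
    simpa [Real.norm_eq_abs] using norm_le_pi_norm v j
  calc ‖v‖ ^ k * |v j * h v| = ‖v‖ ^ k * (|v j| * |h v|) := by rw [abs_mul]
    _ ≤ ‖v‖ ^ k * (‖v‖ * |h v|) := by
        apply mul_le_mul_of_nonneg_left _ (by positivity)
        exact mul_le_mul_of_nonneg_right h1 (abs_nonneg _)
    _ = ‖v‖ ^ (k + 1) * |h v| := by ring
    _ ≤ C := hC v

/-- 1D: the integral of a derivative of a function vanishing at `±∞` is zero. -/
lemma integral_deriv_eq_zero' (g g' : ℝ → ℝ) (hdg : ∀ t, HasDerivAt g (g' t) t)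
    (hi : Integrable g') (ht : Filter.Tendsto g Filter.atTop (nhds 0))
    (hb : Filter.Tendsto g Filter.atBot (nhds 0)) : ∫ t, g' t = 0 := by
  have h1 := integral_Ioi_of_hasDerivAt_of_tendsto' (a := 0)
    (fun x _ => hdg x) hi.integrableOn ht
  have h2 := integral_Iic_of_hasDerivAt_of_tendsto' (a := 0)
    (fun x _ => hdg x) hi.integrableOn hb
  rw [← intervalIntegral.integral_Iic_add_Ioi hi.integrableOn hi.integrableOn (b := 0), h1, h2]
  ring

lemma Decay.bound' {d : ℕ} {h : Vec d → ℝ} (hd : Decay h) (k : ℕ) :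
    ∃ C : ℝ, 0 ≤ C ∧ ∀ v, |h v| ≤ C * ((1 + ‖v‖) ^ k)⁻¹ := by
  obtain ⟨C, hC0, hC⟩ := hd.bound k
  refine ⟨C, hC0, fun v => ?_⟩
  have := hC v
  rwa [Real.rpow_neg (by positivity), Real.rpow_natCast] at this

lemma insertNth_repr {m : ℕ} (i : Fin (m + 1)) (y : Vec m) (t : ℝ) :
    i.insertNth t y = i.insertNth 0 y + t • (Pi.single i 1 : Vec (m + 1)) := by
  funext j
  refine Fin.succAboveCases i ?_ ?_ j
  · simp
  · intro l
    simp [Fin.insertNth_apply_succAbove, Pi.single_eq_of_ne (Fin.succAbove_ne i l)]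

lemma continuous_insertNth {m : ℕ} (i : Fin (m + 1)) (y : Vec m) :
    Continuous (fun t : ℝ => (i.insertNth t y : Vec (m + 1))) := by
  have : (fun t : ℝ => (i.insertNth t y : Vec (m + 1)))
      = fun t => i.insertNth 0 y + t • (Pi.single i 1 : Vec (m + 1)) :=
    funext (insertNth_repr i y)
  rw [this]; fun_prop

lemma abs_le_norm_insertNth {m : ℕ} (i : Fin (m + 1)) (y : Vec m) (t : ℝ) :
    |t| ≤ ‖(i.insertNth t y : Vec (m + 1))‖ := by
  have := norm_le_pi_norm (i.insertNth t y : Vec (m + 1)) i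
  simpa [Fin.insertNth_apply_same, Real.norm_eq_abs] using this

lemma hasDerivAt_slice {m : ℕ} (g : Vec (m + 1) → ℝ) (hg : Differentiable ℝ g)
    (i : Fin (m + 1)) (y : Vec m) (t : ℝ) :
    HasDerivAt (fun s => g (i.insertNth s y)) (pd i g (i.insertNth t y)) t := by
  have h1 : ∀ s : ℝ, i.insertNth s y = i.insertNth 0 y + s • (Pi.single i 1 : Vec (m + 1)) :=
    insertNth_repr i y
  have hinner : HasDerivAt
      (fun s : ℝ => i.insertNth 0 y + s • (Pi.single i 1 : Vec (m + 1)))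
      (Pi.single i 1 : Vec (m + 1)) t := by
    simpa using ((hasDerivAt_id t).smul_const (Pi.single i 1 : Vec (m + 1))).const_add
      (i.insertNth 0 y)
  have hfun : (fun s => g (i.insertNth s y))
      = fun s => g (i.insertNth 0 y + s • (Pi.single i 1 : Vec (m + 1))) :=
    funext fun s => by rw [← h1 s]
  rw [pd, hfun, h1 t]
  exact (hg _).hasFDerivAt.comp_hasDerivAt t hinner

lemma integrable_one_add_abs_pow_inv (k : ℕ) (hk : 2 ≤ k) :
    Integrable (fun t : ℝ => ((1 + |t|) ^ k)⁻¹) := by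
  have hfr : (Module.finrank ℝ ℝ : ℝ) < ((k : ℕ) : ℝ) := by
    simp only [Module.finrank_self]
    exact_mod_cast lt_of_lt_of_le one_lt_two hk
  have h := integrable_one_add_norm (E := ℝ) (μ := volume) (r := (k : ℝ)) hfr
  have heq : (fun t : ℝ => (1 + ‖t‖) ^ (-(k : ℝ))) = fun t : ℝ => ((1 + |t|) ^ k)⁻¹ :=
    funext fun t => by
      rw [Real.rpow_neg (by positivity), Real.rpow_natCast, Real.norm_eq_abs]
  rwa [heq] at h

lemma invPowAnti {k : ℕ} {s t : ℝ} (h0 : 0 ≤ t) (h : t ≤ s) :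
    ((1 + s) ^ k)⁻¹ ≤ ((1 + t) ^ k)⁻¹ := by
  apply inv_anti₀ (by positivity)
  exact pow_le_pow_left₀ (by linarith) (by linarith) k

lemma slice_integrable {m : ℕ} {h : Vec (m + 1) → ℝ} (hc : Continuous h) (hd : Decay h)
    (i : Fin (m + 1)) (y : Vec m) :
    Integrable (fun t : ℝ => h (i.insertNth t y)) := by
  obtain ⟨C, hC0, hC⟩ := hd.bound' 2
  refine ((integrable_one_add_abs_pow_inv 2 le_rfl).const_mul C).mono'
    ((hc.comp (continuous_insertNth i y)).aestronglyMeasurable) (ae_of_all _ fun t => ?_)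
  have h2 : ((1 + ‖(i.insertNth t y : Vec (m + 1))‖) ^ 2)⁻¹ ≤ ((1 + |t|) ^ 2)⁻¹ :=
    invPowAnti (s := ‖(i.insertNth t y : Vec (m + 1))‖) (abs_nonneg t) (abs_le_norm_insertNth i y t)
  calc ‖h (i.insertNth t y)‖ = |h (i.insertNth t y)| := rfl
    _ ≤ C * ((1 + ‖(i.insertNth t y : Vec (m + 1))‖) ^ 2)⁻¹ := hC _
    _ ≤ C * ((1 + |t|) ^ 2)⁻¹ := by gcongr

lemma slice_integrable_mul {m : ℕ} {h : Vec (m + 1) → ℝ} (hc : Continuous h) (hd : Decay h)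
    (i : Fin (m + 1)) (y : Vec m) :
    Integrable (fun t : ℝ => t * h (i.insertNth t y)) := by
  obtain ⟨C, hC0, hC⟩ := hd.bound' 3
  refine ((integrable_one_add_abs_pow_inv 2 le_rfl).const_mul C).mono'
    ((continuous_id.mul (hc.comp (continuous_insertNth i y))).aestronglyMeasurable)
    (ae_of_all _ fun t => ?_)
  have hpos : (0:ℝ) < 1 + |t| := by positivity
  have h2 : |h (i.insertNth t y)| ≤ C * ((1 + |t|) ^ 3)⁻¹ :=
    (hC _).trans (mul_le_mul_of_nonneg_left
      (invPowAnti (s := ‖(i.insertNth t y : Vec (m + 1))‖) (abs_nonneg t) (abs_le_norm_insertNth i y t)) hC0)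
  calc ‖t * h (i.insertNth t y)‖ = |t| * |h (i.insertNth t y)| := abs_mul _ _
    _ ≤ (1 + |t|) * (C * ((1 + |t|) ^ 3)⁻¹) := by
        refine mul_le_mul (by linarith [abs_nonneg t]) h2 (abs_nonneg _) (by positivity)
    _ = C * ((1 + |t|) ^ 2)⁻¹ := by field_simp

lemma slice_tendsto {m : ℕ} {h : Vec (m + 1) → ℝ} (hd : Decay h)
    (i : Fin (m + 1)) (y : Vec m) {l : Filter ℝ}
    (hl : Filter.Tendsto (fun t : ℝ => |t|) l Filter.atTop) :
    Filter.Tendsto (fun t : ℝ => h (i.insertNth t y)) l (nhds 0) := by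
  obtain ⟨C, hC0, hC⟩ := hd.bound' 1
  refine squeeze_zero_norm (a := fun t : ℝ => C * (1 + |t|)⁻¹) (fun t => ?_) ?_
  · show ‖h (i.insertNth t y)‖ ≤ C * (1 + |t|)⁻¹
    calc ‖h (i.insertNth t y)‖ = |h (i.insertNth t y)| := rfl
      _ ≤ C * ((1 + ‖(i.insertNth t y : Vec (m + 1))‖) ^ 1)⁻¹ := hC _
      _ ≤ C * ((1 + |t|) ^ 1)⁻¹ := mul_le_mul_of_nonneg_left
          (invPowAnti (s := ‖(i.insertNth t y : Vec (m + 1))‖) (abs_nonneg t) (abs_le_norm_insertNth i y t)) hC0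
      _ = C * (1 + |t|)⁻¹ := by rw [pow_one]
  · have h1 : Filter.Tendsto (fun t : ℝ => 1 + |t|) l Filter.atTop :=
      Filter.tendsto_atTop_add_const_left _ 1 hl
    have := h1.inv_tendsto_atTop.const_mul C
    simpa using this

lemma slice_tendsto_mul {m : ℕ} {h : Vec (m + 1) → ℝ} (hd : Decay h)
    (i : Fin (m + 1)) (y : Vec m) {l : Filter ℝ}
    (hl : Filter.Tendsto (fun t : ℝ => |t|) l Filter.atTop) :
    Filter.Tendsto (fun t : ℝ => t * h (i.insertNth t y)) l (nhds 0) := by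
  obtain ⟨C, hC0, hC⟩ := hd.bound' 2
  refine squeeze_zero_norm (a := fun t : ℝ => C * (1 + |t|)⁻¹) (fun t => ?_) ?_
  · show ‖t * h (i.insertNth t y)‖ ≤ C * (1 + |t|)⁻¹
    have hpos : (0:ℝ) < 1 + |t| := by positivity
    have h2 : |h (i.insertNth t y)| ≤ C * ((1 + |t|) ^ 2)⁻¹ :=
      (hC _).trans (mul_le_mul_of_nonneg_left
        (invPowAnti (s := ‖(i.insertNth t y : Vec (m + 1))‖) (abs_nonneg t)
          (abs_le_norm_insertNth i y t)) hC0)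
    calc ‖t * h (i.insertNth t y)‖ = |t| * |h (i.insertNth t y)| := abs_mul _ _
      _ ≤ (1 + |t|) * (C * ((1 + |t|) ^ 2)⁻¹) := by
          refine mul_le_mul (by linarith [abs_nonneg t]) h2 (abs_nonneg _) (by positivity)
      _ = C * (1 + |t|)⁻¹ := by field_simp
  · have h1 : Filter.Tendsto (fun t : ℝ => 1 + |t|) l Filter.atTop :=
      Filter.tendsto_atTop_add_const_left _ 1 hl
    have := h1.inv_tendsto_atTop.const_mul C
    simpa using this

lemma integral_insertNth {m : ℕ} (i : Fin (m + 1)) (H : Vec (m + 1) → ℝ)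
    (hH : Integrable H) :
    ∫ v, H v = ∫ y : Vec m, ∫ t : ℝ, H (i.insertNth t y) := by
  have MP := (MeasureTheory.volume_preserving_piFinSuccAbove (fun _ : Fin (m + 1) => ℝ) i).symm
  rw [← MP.integral_comp' H]
  have hint : Integrable
      (H ∘ (MeasurableEquiv.piFinSuccAbove (fun _ : Fin (m + 1) => ℝ) i).symm)
      (volume.prod volume) := by
    rw [← MeasureTheory.Measure.volume_eq_prod,
      MP.integrable_comp_emb (MeasurableEquiv.measurableEmbedding _)]
    exact hH
  rw [MeasureTheory.Measure.volume_eq_prod]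
  rw [show (fun x : ℝ × Vec m => H ((MeasurableEquiv.piFinSuccAbove (fun _ => ℝ) i).symm x))
      = H ∘ (MeasurableEquiv.piFinSuccAbove (fun _ : Fin (m + 1) => ℝ) i).symm from rfl]
  rw [MeasureTheory.integral_prod_symm _ hint]
  rfl

lemma norm_pd_le {d : ℕ} (i : Fin d) (g : Vec d → ℝ) (v : Vec d) :
    |pd i g v| ≤ ‖fderiv ℝ g v‖ := by
  have h1 : ‖(Pi.single i 1 : Vec d)‖ ≤ 1 := by
    apply (pi_norm_le_iff_of_nonneg zero_le_one).2
    intro j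
    rcases eq_or_ne j i with rfl | hne
    · simp
    · simp [Pi.single_eq_of_ne hne]
  calc |pd i g v| = ‖fderiv ℝ g v (Pi.single i 1)‖ := rfl
    _ ≤ ‖fderiv ℝ g v‖ * ‖(Pi.single i 1 : Vec d)‖ := (fderiv ℝ g v).le_opNorm _
    _ ≤ ‖fderiv ℝ g v‖ * 1 := by gcongr
    _ = ‖fderiv ℝ g v‖ := mul_one _

lemma decay_pd {d : ℕ} (i : Fin d) {g : Vec d → ℝ}
    (hdec' : Decay (fun v => ‖fderiv ℝ g v‖)) : Decay (pd i g) := by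
  intro k
  obtain ⟨C, hC⟩ := hdec' k
  refine ⟨C, fun v => ?_⟩
  calc ‖v‖ ^ k * |pd i g v| ≤ ‖v‖ ^ k * ‖fderiv ℝ g v‖ :=
        mul_le_mul_of_nonneg_left (norm_pd_le i g v) (by positivity)
    _ ≤ C := by simpa [abs_norm] using hC v

lemma continuous_pd {d : ℕ} (i : Fin d) {g : Vec d → ℝ} (hg : ContDiff ℝ (⊤ : ℕ∞) g) :
    Continuous (pd i g) :=
  ((hg.fderiv_right (m := (⊤ : ℕ∞)) (by simp)).continuous).clm_apply continuous_const

lemma contDiff_pd {d : ℕ} (i : Fin d) {g : Vec d → ℝ} (hg : ContDiff ℝ (⊤ : ℕ∞) g) :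
    ContDiff ℝ (⊤ : ℕ∞) (pd i g) :=
  (hg.fderiv_right (m := (⊤ : ℕ∞)) (by simp)).clm_apply contDiff_const

lemma slice_pd_zero {m : ℕ} {g : Vec (m + 1) → ℝ} (hg : ContDiff ℝ (⊤ : ℕ∞) g)
    (hdec : Decay g) (hdec' : Decay (fun v => ‖fderiv ℝ g v‖))
    (i : Fin (m + 1)) (y : Vec m) :
    ∫ t : ℝ, pd i g (i.insertNth t y) = 0 := by
  exact integral_deriv_eq_zero' (fun t => g (i.insertNth t y)) _
    (hasDerivAt_slice g (hg.differentiable (by simp)) i y)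
    (slice_integrable (continuous_pd i hg) (decay_pd i hdec') i y)
    (slice_tendsto hdec i y Filter.tendsto_abs_atTop_atTop)
    (slice_tendsto hdec i y Filter.tendsto_abs_atBot_atTop)

lemma integral_pd_eq_zero {d : ℕ} (i : Fin d) {g : Vec d → ℝ} (hg : ContDiff ℝ (⊤ : ℕ∞) g)
    (hdec : Decay g) (hdec' : Decay (fun v => ‖fderiv ℝ g v‖)) :
    ∫ v, pd i g v = 0 := by
  obtain ⟨m, rfl⟩ : ∃ m, d = m + 1 := ⟨d - 1, (Nat.succ_pred_eq_of_pos i.pos).symm⟩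
  rw [integral_insertNth i _ ((decay_pd i hdec').integrable (continuous_pd i hg))]
  simp [slice_pd_zero hg hdec hdec' i]

lemma integral_coord_mul_pd {d : ℕ} (i j : Fin d) {g : Vec d → ℝ} (hg : ContDiff ℝ (⊤ : ℕ∞) g)
    (hdec : Decay g) (hdec' : Decay (fun v => ‖fderiv ℝ g v‖)) :
    ∫ v, v j * pd i g v = -(if j = i then ∫ v, g v else 0) := by
  obtain ⟨m, rfl⟩ : ∃ m, d = m + 1 := ⟨d - 1, (Nat.succ_pred_eq_of_pos i.pos).symm⟩
  have hpdc : Continuous (pd i g) := continuous_pd i hg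
  have hpdd : Decay (pd i g) := decay_pd i hdec'
  have hint : Integrable (fun v : Vec (m + 1) => v j * pd i g v) :=
    (hpdd.mul_coord j).integrable ((continuous_apply j).mul hpdc)
  rw [integral_insertNth i _ hint]
  rcases eq_or_ne j i with rfl | hne
  · simp only [if_pos rfl]
    have inner : ∀ y : Vec m,
        (∫ t : ℝ, (j.insertNth t y : Vec (m + 1)) j * pd j g (j.insertNth t y))
          = - ∫ t : ℝ, g (j.insertNth t y) := by
      intro y
      have hsame : ∀ t : ℝ, (j.insertNth t y : Vec (m + 1)) j = t := fun t => by simp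
      have heq : (fun t : ℝ => (j.insertNth t y : Vec (m + 1)) j * pd j g (j.insertNth t y))
          = fun t : ℝ => t * pd j g (j.insertNth t y) := funext fun t => by rw [hsame]
      rw [heq]
      have hInt1 : Integrable (fun t : ℝ => g (j.insertNth t y)) :=
        slice_integrable hg.continuous hdec j y
      have hInt2 : Integrable (fun t : ℝ => t * pd j g (j.insertNth t y)) :=
        slice_integrable_mul hpdc hpdd j y
      have h0 : ∫ t : ℝ, (g (j.insertNth t y) + t * pd j g (j.insertNth t y)) = 0 := by
        refine integral_deriv_eq_zero' (fun t => t * g (j.insertNth t y)) _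
          (fun t => ?_) (hInt1.add hInt2)
          (slice_tendsto_mul hdec j y Filter.tendsto_abs_atTop_atTop)
          (slice_tendsto_mul hdec j y Filter.tendsto_abs_atBot_atTop)
        have : HasDerivAt (fun s : ℝ => s * g (j.insertNth s y))
            (1 * g (j.insertNth t y) + t * pd j g (j.insertNth t y)) t :=
          (hasDerivAt_id' t).mul (hasDerivAt_slice g (hg.differentiable (by simp)) j y t)
        simpa using this
      rw [integral_add hInt1 hInt2] at h0
      linarith
    calc (∫ y : Vec m, ∫ t : ℝ, (j.insertNth t y : Vec (m + 1)) j * pd j g (j.insertNth t y))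
        = ∫ y : Vec m, - ∫ t : ℝ, g (j.insertNth t y) := by
          exact integral_congr_ae (Filter.Eventually.of_forall inner)
      _ = - ∫ y : Vec m, ∫ t : ℝ, g (j.insertNth t y) := integral_neg _
      _ = - ∫ v, g v := by rw [← integral_insertNth j _ (hdec.integrable hg.continuous)]
  · obtain ⟨l, hl⟩ := Fin.exists_succAbove_eq hne
    have inner : ∀ y : Vec m,
        (∫ t : ℝ, (i.insertNth t y : Vec (m + 1)) j * pd i g (i.insertNth t y)) = 0 := by
      intro y
      have heq : (fun t : ℝ => (i.insertNth t y : Vec (m + 1)) j * pd i g (i.insertNth t y))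
          = fun t : ℝ => y l * pd i g (i.insertNth t y) := by
        funext t
        rw [← hl, Fin.insertNth_apply_succAbove]
      rw [heq, integral_const_mul, slice_pd_zero hg hdec hdec' i y, mul_zero]
    simp [inner, hne]

lemma fderiv_section_le {d : ℕ} {F : Vec d × Vec d → ℝ} (hF : ContDiff ℝ (⊤ : ℕ∞) F)
    (x v : Vec d) : ‖fderiv ℝ (fun w => F (x, w)) v‖ ≤ ‖fderiv ℝ F (x, v)‖ := by
  have hder : HasFDerivAt (fun w => F (x, w))
      ((fderiv ℝ F (x, v)).comp (ContinuousLinearMap.inr ℝ (Vec d) (Vec d))) v :=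
    (hF.differentiable (by simp) (x, v)).hasFDerivAt.comp v
      (hasFDerivAt_prodMk_right x v)
  rw [hder.fderiv]
  refine ContinuousLinearMap.opNorm_le_bound _ (norm_nonneg _) fun w => ?_
  have h1 : ‖((0 : Vec d), w)‖ = ‖w‖ := by
    rw [Prod.norm_def]
    simp [max_eq_right (norm_nonneg w)]
  calc ‖((fderiv ℝ F (x, v)).comp (ContinuousLinearMap.inr ℝ (Vec d) (Vec d))) w‖
      = ‖fderiv ℝ F (x, v) ((0 : Vec d), w)‖ := rfl
    _ ≤ ‖fderiv ℝ F (x, v)‖ * ‖((0 : Vec d), w)‖ := (fderiv ℝ F (x, v)).le_opNorm _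
    _ = ‖fderiv ℝ F (x, v)‖ * ‖w‖ := by rw [h1]

lemma integrableOn_box {d : ℕ} {g : Vec d → ℝ} (hg : Continuous g) :
    IntegrableOn g (Set.pi Set.univ fun _ : Fin d => Set.Ioc 0 (2 * π)) := by
  have hc : IsCompact (Set.pi Set.univ fun _ : Fin d => Set.Icc (0:ℝ) (2 * π)) :=
    isCompact_univ_pi fun _ => isCompact_Icc
  have := hg.continuousOn.integrableOn_compact (μ := volume) hc
  exact this.mono_set (Set.pi_mono fun i _ => Set.Ioc_subset_Icc_self)

lemma key_inner {d : ℕ} (f : Vec d → Vec d → ℝ)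
    (hF : ContDiff ℝ (⊤ : ℕ∞) (fun p : Vec d × Vec d => f p.1 p.2))
    (hdecF : ∀ n k : ℕ, ∃ C : ℝ, ∀ x v : Vec d,
      ‖v‖ ^ k * ‖iteratedFDeriv ℝ n (fun p : Vec d × Vec d => f p.1 p.2) (x, v)‖ ≤ C)
    (A : ℝ) (b : Fin d → ℝ) (x : Vec d) :
    (∫ v, (A + ∑ j, v j * (- b j)) * ∑ i, b i * pd i (fun w => f x w) v)
      = (∫ v, f x v) * ∑ i, (b i) ^ 2 := by
  have hgx : ContDiff ℝ (⊤ : ℕ∞) (fun w => f x w) :=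
    hF.comp (contDiff_const.prodMk contDiff_id)
  have hdg : Decay (fun w => f x w) := by
    intro k; obtain ⟨C, hC⟩ := hdecF 0 k
    exact ⟨C, fun v => by
      simpa [norm_iteratedFDeriv_zero, Real.norm_eq_abs] using hC x v⟩
  have hdg' : Decay (fun v => ‖fderiv ℝ (fun w => f x w) v‖) := by
    intro k; obtain ⟨C, hC⟩ := hdecF 1 k
    refine ⟨C, fun v => ?_⟩
    have h0 : ‖fderiv ℝ (fun p : Vec d × Vec d => f p.1 p.2) (x, v)‖
        = ‖iteratedFDeriv ℝ 1 (fun p : Vec d × Vec d => f p.1 p.2) (x, v)‖ := by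
      have := norm_iteratedFDeriv_fderiv (𝕜 := ℝ)
        (f := fun p : Vec d × Vec d => f p.1 p.2) (n := 0) (x := (x, v))
      rwa [norm_iteratedFDeriv_zero] at this
    have h1 : ‖fderiv ℝ (fun w => f x w) v‖
        ≤ ‖iteratedFDeriv ℝ 1 (fun p : Vec d × Vec d => f p.1 p.2) (x, v)‖ := by
      rw [← h0]; exact fderiv_section_le hF x v
    calc ‖v‖ ^ k * |‖fderiv ℝ (fun w => f x w) v‖|
        = ‖v‖ ^ k * ‖fderiv ℝ (fun w => f x w) v‖ := by rw [abs_norm]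
      _ ≤ ‖v‖ ^ k * ‖iteratedFDeriv ℝ 1 (fun p : Vec d × Vec d => f p.1 p.2) (x, v)‖ := by
          gcongr
      _ ≤ C := hC x v
  have hpd_int : ∀ i : Fin d, Integrable (fun v => pd i (fun w => f x w) v) := fun i =>
    (decay_pd i hdg').integrable (continuous_pd i hgx)
  have hmul_int : ∀ i j : Fin d, Integrable (fun v => v j * pd i (fun w => f x w) v) :=
    fun i j => ((decay_pd i hdg').mul_coord j).integrable
      ((continuous_apply j).mul (continuous_pd i hgx))
  have hrw : ∀ v : Vec d, (A + ∑ j, v j * (- b j)) * ∑ i, b i * pd i (fun w => f x w) v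
      = ∑ i, ((A * b i) * pd i (fun w => f x w) v
          + ∑ j, ((- b j * b i)) * (v j * pd i (fun w => f x w) v)) := by
    intro v
    rw [Finset.mul_sum]
    refine Finset.sum_congr rfl fun i _ => ?_
    rw [add_mul, Finset.sum_mul]
    congr 1
    · ring
    · exact Finset.sum_congr rfl fun j _ => by ring
  rw [integral_congr_ae (Filter.Eventually.of_forall hrw)]
  rw [integral_finset_sum (Finset.univ)
    (f := fun (i : Fin d) (a : Vec d) => A * b i * pd i (fun w => f x w) a
        + ∑ j : Fin d, -b j * b i * (a j * pd i (fun w => f x w) a))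
    (fun i _ =>
      ((hpd_int i).const_mul _).add (integrable_finset_sum _ (fun j _ =>
        (hmul_int i j).const_mul _)))]
  have hper : ∀ i : Fin d,
      (∫ v, ((A * b i) * pd i (fun w => f x w) v
          + ∑ j, ((- b j * b i)) * (v j * pd i (fun w => f x w) v)))
        = (∫ v, f x v) * (b i) ^ 2 := by
    intro i
    rw [integral_add ((hpd_int i).const_mul _)
      (integrable_finset_sum _ (fun j _ => (hmul_int i j).const_mul _)),
      integral_const_mul, integral_pd_eq_zero i hgx hdg hdg', mul_zero, zero_add,
      integral_finset_sum _ (fun j _ => (hmul_int i j).const_mul _)]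
    have hj : ∀ j : Fin d, (∫ v, ((- b j * b i)) * (v j * pd i (fun w => f x w) v))
        = if j = i then (∫ v, f x v) * (b i) ^ 2 else 0 := by
      intro j
      rw [integral_const_mul, integral_coord_mul_pd i j hgx hdg hdg']
      rcases eq_or_ne j i with rfl | hne
      · simp; ring
      · simp [hne]
    rw [Finset.sum_congr rfl fun j _ => hj j]
    simp
  rw [Finset.sum_congr rfl fun i _ => hper i, ← Finset.mul_sum]

/-- `[[T,U],U](f) = 2 m(f) U(f) + V(f)`; explicitly,
`∫∫ (Z(f)(x) + v·E(f)(x)) (∂_x φ(f)(x)·∂_v f(x,v)) dx dv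
  = m(f) ∫ |∂_x φ(f)|² dx − ∫ Δ_x φ(f) |∂_x φ(f)|² dx`,
where `U(f) = (1/2)∫|E(f)|²` and `V(f) = −∫ Δ_x φ(f) |∂_x φ(f)|² dx`. -/
theorem stmt8 (d : ℕ) (f : Vec d → Vec d → ℝ) (hf : GoodPhase f)
    (φf : Vec d → ℝ) (hφf : IsElectricPotential f φf)
    (ζ : Vec d → Vec d → ℝ)
    (hζsmooth : ContDiff ℝ (⊤ : ℕ∞) (fun p : Vec d × Vec d => ζ p.1 p.2))
    (hζper : ∀ (x w : Vec d) (k : Fin d → ℤ),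
      ζ (fun i => x i + 2 * π * (k i : ℝ)) w = ζ x w)
    (hζmean : ∀ w, (∫ x in Box d, ζ x w) = 0)
    (hζeq : ∀ x w, lap (fun y => ζ y w) x = ∑ i, w i * pdx i f x w)
    (Z : Vec d → ℝ) (hZ : ∀ x, Z x = - ∫ w, ζ x w) :
    (∫ x in Box d, ∫ v,
        (Z x + ∑ i, v i * (- pd i φf x)) * ∑ i, pd i φf x * pdv i f x v)
      = mTot f * (∫ x in Box d, ∑ i, (pd i φf x) ^ 2)
        - ∫ x in Box d, lap φf x * ∑ i, (pd i φf x) ^ 2 := by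
  obtain ⟨hF, hper, hdecF⟩ := hf
  obtain ⟨hφs, hφper, hφmean, hφeq⟩ := hφf
  have hS : Continuous (fun x : Vec d => ∑ i, (pd i φf x) ^ 2) :=
    continuous_finset_sum _ fun i _ => (continuous_pd i hφs).pow 2
  have hlap : Continuous (lap φf) := by
    unfold lap
    exact continuous_finset_sum _ fun i _ => continuous_pd i (contDiff_pd i hφs)
  have key : ∀ x : Vec d,
      (∫ v, (Z x + ∑ i, v i * (- pd i φf x)) * ∑ i, pd i φf x * pdv i f x v)
        = (mTot f - lap φf x) * ∑ i, (pd i φf x) ^ 2 := by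
    intro x
    have h1 := key_inner f hF hdecF (Z x) (fun i => pd i φf x) x
    have h2 : (∫ v, f x v) = mTot f - lap φf x := by
      have := hφeq x
      simp only [dens] at this
      linarith
    rw [h2] at h1
    exact h1
  have hcongr : (∫ x in Box d, ∫ v,
      (Z x + ∑ i, v i * (- pd i φf x)) * ∑ i, pd i φf x * pdv i f x v)
      = ∫ x in Box d, (mTot f - lap φf x) * ∑ i, (pd i φf x) ^ 2 :=
    integral_congr_ae (Filter.Eventually.of_forall fun x => key x)
  rw [hcongr]
  have hSint : IntegrableOn (fun x => ∑ i, (pd i φf x) ^ 2) (Box d) :=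
    integrableOn_box hS
  have hLint : IntegrableOn (fun x => lap φf x * ∑ i, (pd i φf x) ^ 2) (Box d) :=
    integrableOn_box (hlap.mul hS)
  have hsplit : ∀ x : Vec d, (mTot f - lap φf x) * ∑ i, (pd i φf x) ^ 2
      = mTot f * (∑ i, (pd i φf x) ^ 2) - lap φf x * ∑ i, (pd i φf x) ^ 2 :=
    fun x => by ring
  rw [integral_congr_ae (Filter.Eventually.of_forall fun x => hsplit x)]
  rw [integral_sub (hSint.const_mul (mTot f)) hLint]
  rw [integral_const_mul]
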